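/- Under the Gauss-decomposition assumptions, the cross-product factorizes as A >⋊ H = ζ̃⁺(H⁺) ζ̃⁻(H⁻) A = ζ̃⁻(H⁻) ζ̃⁺(H⁺) A, i.e., every element of A >⋊ H is a sum of products ζ̃⁺(g⁺) ζ̃⁻(g⁻) a (and likewise in the opposite order). -/

import Mathlib

/-! Since `φ̃ ∘ ι` is an algebra map, its composite with the antipode is its convolution inverse,
so `ζ̃ ⋆ (φ̃ ∘ ι) = ι`, i.e. `g = ζ̃(g₁) φ̃(g₂)`; hence `H± ⊆ ζ̃±(H±) A` inside the cross product.
Reading `A >⋊ H = H A = H⁺ H⁻ A` as a product of subspaces, one replaces `H⁺` by `ζ̃⁺(H⁺) A`,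
moves `A` past `H⁻` by the straightening relation `A H⁻ ⊆ H⁻ A`, replaces `H⁻` by `ζ̃⁻(H⁻) A`
and absorbs `A A A ⊆ A`. Exchanging the roles of `H⁺` and `H⁻` gives the other order. -/

open TensorProduct

/-- `A` is a unital right `H`-module algebra via the bilinear action `act` (written `a ◁ g`):
`a ◁ 1 = a`, `a ◁ (g g') = (a ◁ g) ◁ g'`, `(a a') ◁ g = (a ◁ g₍₁₎)(a' ◁ g₍₂₎)`,
and `1 ◁ g = ε(g) 1`. -/
structure RightModuleAlgebra (k : Type) [Field k] (H A : Type) [Ring H] [Ring A]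
    [HopfAlgebra k H] [Algebra k A] (act : A →ₗ[k] H →ₗ[k] A) : Prop where
  act_one : ∀ a : A, act a 1 = a
  act_mul : ∀ (a : A) (g g' : H), act a (g * g') = act (act a g) g'
  mul_act : ∀ (a a' : A) (g : H), act (a * a') g =
    LinearMap.mul' k A (TensorProduct.map (act a) (act a') (Coalgebra.comul g))
  one_act : ∀ g : H, act (1 : A) g = (Coalgebra.counit (R := k) g) • (1 : A)

/-- The cross-product (smash product) algebra `A >⋊ H`, realized as an ambient algebra `B`
containing `H` and `A` via `ιH`, `ιA`, with the straightening relation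
`a g = g₍₁₎ (a ◁ g₍₂₎)` and with `g ⊗ a ↦ ιH g * ιA a` a linear bijection `H ⊗ A ≃ B`. -/
structure SmashProduct (k : Type) [Field k] (H A B : Type) [Ring H] [Ring A] [Ring B]
    [HopfAlgebra k H] [Algebra k A] [Algebra k B]
    (act : A →ₗ[k] H →ₗ[k] A) : Type where
  ιH : H →ₐ[k] B
  ιA : A →ₐ[k] B
  straighten : ∀ (a : A) (g : H), ιA a * ιH g =
    LinearMap.mul' k B (TensorProduct.map ιH.toLinearMap (ιA.toLinearMap ∘ₗ act a)
      (Coalgebra.comul g))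
  mulMap_bij : Function.Bijective fun x : H ⊗[k] A =>
    LinearMap.mul' k B (TensorProduct.map ιH.toLinearMap ιA.toLinearMap x)

variable {k : Type} [Field k] {H A B : Type} [Ring H] [Ring A] [Ring B]
  [HopfAlgebra k H] [Algebra k A] [Algebra k B] {act : A →ₗ[k] H →ₗ[k] A}

/-- The decoupling map `ζ̃(g) = g₍₁₎ φ̃(S g₍₂₎)`, valued in `A >⋊ H`. -/
noncomputable def zeta (S : SmashProduct k H A B act) (φ : B →ₐ[k] A) : H →ₗ[k] B :=
  (LinearMap.mul' k B) ∘ₗ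
    (TensorProduct.map S.ιH.toLinearMap
      (S.ιA.toLinearMap ∘ₗ φ.toLinearMap ∘ₗ S.ιH.toLinearMap ∘ₗ
        (HopfAlgebra.antipode (R := k) (A := H)))) ∘ₗ Coalgebra.comul


/-- The Gauss-decomposed setting: `H⁺`, `H⁻` are Hopf subalgebras of `H` (realized by
injective algebra embeddings `ιp`, `ιm` compatible with coproduct and antipode), with
`H = H⁺H⁻ = H⁻H⁺`, together with the cross-products `A >⋊ H`, `A >⋊ H⁺`, `A >⋊ H⁻` and
the embeddings `jp : A >⋊ H⁺ → A >⋊ H`, `jm : A >⋊ H⁻ → A >⋊ H`. -/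
structure GaussSetting (k : Type) [Field k] (H A B Hp Hm Bp Bm : Type)
    [Ring H] [Ring A] [Ring B] [Ring Hp] [Ring Hm] [Ring Bp] [Ring Bm]
    [HopfAlgebra k H] [HopfAlgebra k Hp] [HopfAlgebra k Hm]
    [Algebra k A] [Algebra k B] [Algebra k Bp] [Algebra k Bm]
    (act : A →ₗ[k] H →ₗ[k] A) (actp : A →ₗ[k] Hp →ₗ[k] A)
    (actm : A →ₗ[k] Hm →ₗ[k] A) : Type where
  S : SmashProduct k H A B act
  Sp : SmashProduct k Hp A Bp actp
  Sm : SmashProduct k Hm A Bm actm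
  ιp : Hp →ₐ[k] H
  ιm : Hm →ₐ[k] H
  ιp_inj : Function.Injective ιp
  ιm_inj : Function.Injective ιm
  ιp_comul : ∀ g : Hp, Coalgebra.comul (R := k) (ιp g) =
    TensorProduct.map ιp.toLinearMap ιp.toLinearMap (Coalgebra.comul g)
  ιm_comul : ∀ g : Hm, Coalgebra.comul (R := k) (ιm g) =
    TensorProduct.map ιm.toLinearMap ιm.toLinearMap (Coalgebra.comul g)
  ιp_antipode : ∀ g : Hp, HopfAlgebra.antipode (R := k) (ιp g) =
    ιp (HopfAlgebra.antipode (R := k) g)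
  ιm_antipode : ∀ g : Hm, HopfAlgebra.antipode (R := k) (ιm g) =
    ιm (HopfAlgebra.antipode (R := k) g)
  actp_eq : ∀ (a : A) (g : Hp), actp a g = act a (ιp g)
  actm_eq : ∀ (a : A) (g : Hm), actm a g = act a (ιm g)
  jp : Bp →ₐ[k] B
  jm : Bm →ₐ[k] B
  jp_H : ∀ g : Hp, jp (Sp.ιH g) = S.ιH (ιp g)
  jp_A : ∀ a : A, jp (Sp.ιA a) = S.ιA a
  jm_H : ∀ g : Hm, jm (Sm.ιH g) = S.ιH (ιm g)
  jm_A : ∀ a : A, jm (Sm.ιA a) = S.ιA a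
  gauss_pm : Submodule.span k {x : H | ∃ (u : Hp) (v : Hm), x = ιp u * ιm v} = ⊤
  gauss_mp : Submodule.span k {x : H | ∃ (u : Hm) (v : Hp), x = ιm u * ιp v} = ⊤

variable {Hp Hm Bp Bm : Type} [Ring Hp] [Ring Hm] [Ring Bp] [Ring Bm]
  [HopfAlgebra k Hp] [HopfAlgebra k Hm] [Algebra k Bp] [Algebra k Bm]
  {actp : A →ₗ[k] Hp →ₗ[k] A} {actm : A →ₗ[k] Hm →ₗ[k] A}

/-- The decoupling map `ζ̃⁺(g) = g₍₁₎ φ̃⁺(S g₍₂₎)`, viewed inside `A >⋊ H`. -/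
noncomputable def zetaP (G : GaussSetting k H A B Hp Hm Bp Bm act actp actm)
    (φp : Bp →ₐ[k] A) : Hp →ₗ[k] B :=
  G.jp.toLinearMap ∘ₗ zeta G.Sp φp

/-- The decoupling map `ζ̃⁻(g) = g₍₁₎ φ̃⁻(S g₍₂₎)`, viewed inside `A >⋊ H`. -/
noncomputable def zetaM (G : GaussSetting k H A B Hp Hm Bp Bm act actp actm)
    (φm : Bm →ₐ[k] A) : Hm →ₗ[k] B :=
  G.jm.toLinearMap ∘ₗ zeta G.Sm φm

open Coalgebra HopfAlgebra WithConv LinearMap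

lemma AlgHom.comp_antipode_convMul_self {R C D : Type*} [CommSemiring R] [Semiring C]
    [HopfAlgebra R C] [Semiring D] [Algebra R D] (f : C →ₐ[R] D) :
    toConv (f.toLinearMap ∘ₗ antipode R) * toConv f.toLinearMap = 1 := by
  have h := algHom_comp_convMul_distrib f (toConv (antipode R)) (toConv LinearMap.id)
  rw [antipode_mul_id, ofConv_toConv, ofConv_toConv, LinearMap.comp_id] at h
  apply WithConv.ofConv_injective
  rw [← h]
  ext c
  simp

namespace SmashProduct

variable (S : SmashProduct k H A B act)

lemma toConv_zeta (φ : B →ₐ[k] A) :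
    toConv (zeta S φ) = toConv S.ιH.toLinearMap *
      toConv (((S.ιA.comp φ).comp S.ιH).toLinearMap ∘ₗ antipode k) := rfl

lemma zeta_convMul (φ : B →ₐ[k] A) :
    toConv (zeta S φ) * toConv ((S.ιA.comp φ).comp S.ιH).toLinearMap =
      toConv S.ιH.toLinearMap := by
  rw [toConv_zeta, mul_assoc, AlgHom.comp_antipode_convMul_self, mul_one]

lemma range_ιH_le_range_zeta_mul (φ : B →ₐ[k] A) :
    range S.ιH.toLinearMap ≤ range (zeta S φ) * range S.ιA.toLinearMap := by
  rintro _ ⟨g, rfl⟩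
  have h := congr($(S.zeta_convMul φ) g)
  rw [(ℛ k g).convMul_apply] at h
  rw [← h]
  exact Submodule.sum_mem _ fun i _ =>
    Submodule.mul_mem_mul (mem_range_self _ _) (mem_range_self _ _)

lemma range_ιA_mul_range_ιH_le :
    range S.ιA.toLinearMap * range S.ιH.toLinearMap ≤
      range S.ιH.toLinearMap * range S.ιA.toLinearMap := by
  refine Submodule.mul_le.2 ?_
  rintro _ ⟨a, rfl⟩ _ ⟨g, rfl⟩
  rw [AlgHom.toLinearMap_apply, AlgHom.toLinearMap_apply, S.straighten,
    ← convMul_apply (toConv _) (toConv _), (ℛ k g).convMul_apply]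
  exact Submodule.sum_mem _ fun i _ =>
    Submodule.mul_mem_mul (mem_range_self _ _) (mem_range_self _ _)

lemma range_ιH_mul_range_ιA_eq_top : range S.ιH.toLinearMap * range S.ιA.toLinearMap = ⊤ := by
  rw [eq_top_iff]
  rintro b -
  obtain ⟨x, rfl⟩ := S.mulMap_bij.2 b
  induction x using TensorProduct.induction_on with
  | zero => simp
  | tmul g a => exact Submodule.mul_mem_mul (mem_range_self _ g) (mem_range_self _ a)
  | add x y hx hy => simpa only [map_add] using add_mem hx hy

lemma range_ιA_mul_self_le :
    range S.ιA.toLinearMap * range S.ιA.toLinearMap ≤ range S.ιA.toLinearMap :=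
  Submodule.mul_le.2 <| by
    rintro _ ⟨a, rfl⟩ _ ⟨a', rfl⟩
    exact ⟨a * a', map_mul S.ιA a a'⟩

end SmashProduct

lemma span_mul_mul_eq_range_mul_range_mul_range {R M X Y Z : Type*} [CommSemiring R]
    [Semiring M] [Algebra R M] [AddCommMonoid X] [Module R X] [AddCommMonoid Y] [Module R Y]
    [AddCommMonoid Z] [Module R Z] (f : X →ₗ[R] M) (g : Y →ₗ[R] M) (h : Z →ₗ[R] M) :
    Submodule.span R {m : M | ∃ x y z, m = f x * g y * h z} = range f * range g * range h := by
  rw [← Submodule.span_eq (range f), ← Submodule.span_eq (range g), ← Submodule.span_eq (range h),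
    Submodule.span_mul_span, Submodule.span_mul_span, coe_range, coe_range, coe_range]
  congr 1
  ext m
  simp only [Set.mem_ofPred_eq, Set.mem_mul, Set.mem_range]
  constructor
  · rintro ⟨x, y, z, rfl⟩
    exact ⟨_, ⟨_, ⟨x, rfl⟩, _, ⟨y, rfl⟩, rfl⟩, _, ⟨z, rfl⟩, rfl⟩
  · rintro ⟨_, ⟨_, ⟨x, rfl⟩, _, ⟨y, rfl⟩, rfl⟩, _, ⟨z, rfl⟩, rfl⟩
    exact ⟨x, y, z, rfl⟩

namespace GaussSetting

variable (G : GaussSetting k H A B Hp Hm Bp Bm act actp actm)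

def swap : GaussSetting k H A B Hm Hp Bm Bp act actm actp where
  S := G.S
  Sp := G.Sm
  Sm := G.Sp
  ιp := G.ιm
  ιm := G.ιp
  ιp_inj := G.ιm_inj
  ιm_inj := G.ιp_inj
  ιp_comul := G.ιm_comul
  ιm_comul := G.ιp_comul
  ιp_antipode := G.ιm_antipode
  ιm_antipode := G.ιp_antipode
  actp_eq := G.actm_eq
  actm_eq := G.actp_eq
  jp := G.jm
  jm := G.jp
  jp_H := G.jm_H
  jp_A := G.jm_A
  jm_H := G.jp_H
  jm_A := G.jp_A
  gauss_pm := G.gauss_mp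
  gauss_mp := G.gauss_pm

lemma map_jp_range_ιA :
    (range G.Sp.ιA.toLinearMap).map G.jp.toLinearMap = range G.S.ιA.toLinearMap := by
  rw [← range_comp, ← AlgHom.comp_toLinearMap, show G.jp.comp G.Sp.ιA = G.S.ιA from
    AlgHom.ext G.jp_A]

lemma map_jp_range_ιH :
    (range G.Sp.ιH.toLinearMap).map G.jp.toLinearMap = range (G.S.ιH.comp G.ιp).toLinearMap := by
  rw [← range_comp, ← AlgHom.comp_toLinearMap, show G.jp.comp G.Sp.ιH = G.S.ιH.comp G.ιp from
    AlgHom.ext G.jp_H]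

lemma range_ιH_ιp_le_range_zetaP_mul (φp : Bp →ₐ[k] A) :
    range (G.S.ιH.comp G.ιp).toLinearMap ≤ range (zetaP G φp) * range G.S.ιA.toLinearMap := by
  rw [← map_jp_range_ιH, ← map_jp_range_ιA, zetaP, range_comp, ← Submodule.map_mul]
  exact Submodule.map_mono (G.Sp.range_ιH_le_range_zeta_mul φp)

lemma range_ιA_mul_range_ιH_ιp_le :
    range G.S.ιA.toLinearMap * range (G.S.ιH.comp G.ιp).toLinearMap ≤
      range (G.S.ιH.comp G.ιp).toLinearMap * range G.S.ιA.toLinearMap := by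
  rw [← map_jp_range_ιH, ← map_jp_range_ιA, ← Submodule.map_mul, ← Submodule.map_mul]
  exact Submodule.map_mono G.Sp.range_ιA_mul_range_ιH_le

lemma range_ιH_le_range_ιH_ιp_mul_range_ιH_ιm :
    range G.S.ιH.toLinearMap ≤
      range (G.S.ιH.comp G.ιp).toLinearMap * range (G.S.ιH.comp G.ιm).toLinearMap := by
  rw [range_eq_map, ← G.gauss_pm, Submodule.map_span_le]
  rintro _ ⟨u, v, rfl⟩
  rw [AlgHom.toLinearMap_apply, map_mul]
  exact Submodule.mul_mem_mul (mem_range_self _ u) (mem_range_self _ v)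

lemma range_zetaP_mul_range_zetaM_mul_range_ιA_eq_top (φp : Bp →ₐ[k] A) (φm : Bm →ₐ[k] A) :
    range (zetaP G φp) * range (zetaM G φm) * range G.S.ιA.toLinearMap = ⊤ := by
  set Aₛ := range G.S.ιA.toLinearMap
  set Zp := range (zetaP G φp)
  set Zm := range (zetaM G φm)
  refine eq_top_iff.2 ?_
  calc ⊤ = range G.S.ιH.toLinearMap * Aₛ := G.S.range_ιH_mul_range_ιA_eq_top.symm
    _ ≤ range (G.S.ιH.comp G.ιp).toLinearMap * range (G.S.ιH.comp G.ιm).toLinearMap * Aₛ := by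
      gcongr; exact G.range_ιH_le_range_ιH_ιp_mul_range_ιH_ιm
    _ ≤ Zp * Aₛ * range (G.S.ιH.comp G.ιm).toLinearMap * Aₛ := by
      gcongr; exact G.range_ιH_ιp_le_range_zetaP_mul φp
    _ = Zp * (Aₛ * range (G.S.ιH.comp G.ιm).toLinearMap) * Aₛ := by rw [mul_assoc Zp]
    _ ≤ Zp * (range (G.S.ιH.comp G.ιm).toLinearMap * Aₛ) * Aₛ := by
      gcongr Zp * ?_ * Aₛ; exact G.swap.range_ιA_mul_range_ιH_ιp_le
    _ ≤ Zp * (Zm * Aₛ * Aₛ) * Aₛ := by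
      gcongr Zp * (?_ * Aₛ) * Aₛ; exact G.swap.range_ιH_ιp_le_range_zetaP_mul φm
    _ = Zp * Zm * (Aₛ * Aₛ * Aₛ) := by simp only [mul_assoc]
    _ ≤ Zp * Zm * Aₛ := by
      gcongr
      exact (mul_le_mul_left G.S.range_ιA_mul_self_le _).trans G.S.range_ιA_mul_self_le

lemma span_zetaP_mul_zetaM_mul_ιA_eq_top (φp : Bp →ₐ[k] A) (φm : Bm →ₐ[k] A) :
    Submodule.span k {x : B | ∃ (gp : Hp) (gm : Hm) (a : A),
      x = zetaP G φp gp * zetaM G φm gm * G.S.ιA a} = ⊤ := by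
  have h := span_mul_mul_eq_range_mul_range_mul_range (zetaP G φp) (zetaM G φm)
    G.S.ιA.toLinearMap
  simp only [AlgHom.toLinearMap_apply] at h
  rw [h, G.range_zetaP_mul_range_zetaM_mul_range_ιA_eq_top]

end GaussSetting

theorem smash_factorization_pm_general
    (G : GaussSetting k H A B Hp Hm Bp Bm act actp actm)
    (φp : Bp →ₐ[k] A) (φm : Bm →ₐ[k] A) :
    Submodule.span k {x : B | ∃ (gp : Hp) (gm : Hm) (a : A),
      x = zetaP G φp gp * zetaM G φm gm * G.S.ιA a} = ⊤ ∧
    Submodule.span k {x : B | ∃ (gm : Hm) (gp : Hp) (a : A),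
      x = zetaM G φm gm * zetaP G φp gp * G.S.ιA a} = ⊤ :=
  ⟨G.span_zetaP_mul_zetaM_mul_ιA_eq_top φp φm, G.swap.span_zetaP_mul_zetaM_mul_ιA_eq_top φm φp⟩

/-- `A >⋊ H = ζ̃⁺(H⁺) ζ̃⁻(H⁻) A = ζ̃⁻(H⁻) ζ̃⁺(H⁺) A`. -/
theorem smash_factorization_pm
    (hMA : RightModuleAlgebra k H A act)
    (G : GaussSetting k H A B Hp Hm Bp Bm act actp actm)
    (φp : Bp →ₐ[k] A) (φm : Bm →ₐ[k] A)
    (hφp : ∀ a : A, φp (G.Sp.ιA a) = a) (hφm : ∀ a : A, φm (G.Sm.ιA a) = a) :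
    Submodule.span k {x : B | ∃ (gp : Hp) (gm : Hm) (a : A),
      x = zetaP G φp gp * zetaM G φm gm * G.S.ιA a} = ⊤ ∧
    Submodule.span k {x : B | ∃ (gm : Hm) (gp : Hp) (a : A),
      x = zetaM G φm gm * zetaP G φp gp * G.S.ιA a} = ⊤ :=
  smash_factorization_pm_general G φp φm
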